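/- arXiv:2407.20914 — 2 statements merged into one kernel-verified Lean document; each statement's English description precedes it below -/
import Mathlib

section
/- Suppose the real penalty parameter satisfies λ > (sin(π/K)/(1 − cos(π/K)))·max_{1≤u≤U} L_u. Then every global maximizer x* of f_0 over the relaxed feasible set A (i.e., x* ∈ A with f_0(x) ≤ f_0(x*) for all x ∈ A) satisfies x*_n ∈ 𝒳 for every n = 1,…,N; in particular ‖x*‖₁ = N + 1. -/
open Complex Finset

noncomputable section

/-- The set of `K`-th roots of unity in `ℂ`. -/
def rootsSet (K : ℕ) : Set ℂ :=
  {z : ℂ | ∃ k : ℕ, k < K ∧ z = Complex.exp ((2 * Real.pi * k / K : ℝ) * Complex.I)}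

/-- The convex hull (over `ℝ`) of the `K`-th roots of unity. -/
def hullSet (K : ℕ) : Set ℂ := convexHull ℝ (rootsSet K)

/-- The relaxed feasible set `A`. -/
def feasA (K N : ℕ) : Set (Fin (N + 1) → ℂ) :=
  {x | x 0 = 1 ∧ ∀ n : Fin (N + 1), n ≠ 0 → x n ∈ hullSet K}

/-- The discrete feasible set `D`. -/
def feasD (K N : ℕ) : Set (Fin (N + 1) → ℂ) :=
  {x | x 0 = 1 ∧ ∀ n : Fin (N + 1), n ≠ 0 → x n ∈ rootsSet K}

/-- The ℓ1 norm of a complex vector. -/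
def norm1 {N : ℕ} (x : Fin (N + 1) → ℂ) : ℝ := ∑ n, ‖x n‖

/-- The ℓ2 norm of a complex vector. -/
def norm2 {N : ℕ} (x : Fin (N + 1) → ℂ) : ℝ := Real.sqrt (∑ n, ‖x n‖ ^ 2)

/-- The (real) quadratic form `x^H C x`. -/
def quadForm {N : ℕ} (C : Matrix (Fin (N + 1)) (Fin (N + 1)) ℂ)
    (x : Fin (N + 1) → ℂ) : ℝ :=
  (dotProduct (star x) (Matrix.mulVec C x)).re

/-- The Frobenius norm of a complex matrix. -/
def frobNorm {N : ℕ} (M : Matrix (Fin (N + 1)) (Fin (N + 1)) ℂ) : ℝ :=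
  Real.sqrt (∑ i, ∑ j, ‖M i j‖ ^ 2)

/-- The SINR-type objective `f_u`. -/
def fObj {N U : ℕ} (C : Fin U → Fin U → Matrix (Fin (N + 1)) (Fin (N + 1)) ℂ)
    (σ : Fin U → ℝ) (u : Fin U) (x : Fin (N + 1) → ℂ) : ℝ :=
  quadForm (C u u) x /
    ((∑ u' ∈ Finset.univ.erase u, quadForm (C u u') x) + σ u ^ 2)

/-- The Lipschitz constant `L_u`. -/
def Lconst {N U : ℕ} (C : Fin U → Fin U → Matrix (Fin (N + 1)) (Fin (N + 1)) ℂ)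
    (σ : Fin U → ℝ) (u : Fin U) : ℝ :=
  2 * Real.sqrt ((N : ℝ) + 1) * frobNorm (C u u) / σ u ^ 2 *
    (1 + ((N : ℝ) + 1) * frobNorm (∑ u' ∈ Finset.univ.erase u, C u u') / σ u ^ 2)

/-- The minimum of the `f_u` over all users. -/
def minObj {N U : ℕ} (C : Fin U → Fin U → Matrix (Fin (N + 1)) (Fin (N + 1)) ℂ)
    (σ : Fin U → ℝ) (x : Fin (N + 1) → ℂ) : ℝ :=
  ⨅ u : Fin U, fObj C σ u x

/-- The penalized objective `f_0`. -/
def f0 {N U : ℕ} (C : Fin U → Fin U → Matrix (Fin (N + 1)) (Fin (N + 1)) ℂ)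
    (σ : Fin U → ℝ) (lam : ℝ) (x : Fin (N + 1) → ℂ) : ℝ :=
  minObj C σ x + lam * norm1 x

/-
Suppose a coordinate `z = x*ₙ` (`n ≥ 1`) of a maximizer is not a `K`-th root of
unity, and move it to a suitable vertex `v` of the polygon `conv 𝒳`. On the unit polydisc every
`f_u` is `L_u`-Lipschitz for the ℓ² norm (Cauchy–Schwarz bounds `x^H C y` by
`‖C‖_F ‖x‖₂ ‖y‖₂`), so `min_u f_u` drops by at most `(max_u L_u) |v - z|`, while the penalty
gains `λ (1 - |z|)`. It remains to find a vertex with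
`(1 - cos (π/K)) |v - z| ≤ sin (π/K) (1 - |z|)`. Rotate `z` so that the vertex maximizing
`Re (z v̄)` becomes `1`; the rotated point then lies in the kite spanned by `0`, `1` and the
midpoints `cos (π/K) e^{± iπ/K}` of the two edges at `1`. The function
`w ↦ sin (π/K) (1 - |w|) - (1 - cos (π/K)) |1 - w|` is concave and nonnegative at the four
corners of the kite, hence nonnegative on it.
-/

open Matrix
open scoped Real ComplexOrder

lemma norm2_le_sqrt_of_norm_le_one {N : ℕ} {x : Fin (N + 1) → ℂ} (hx : ∀ i, ‖x i‖ ≤ 1) :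
    norm2 x ≤ √((N : ℝ) + 1) := by
  have h : ∑ i, ‖x i‖ ^ 2 ≤ ∑ _i : Fin (N + 1), (1 : ℝ) :=
    Finset.sum_le_sum fun i _ => pow_le_one₀ (norm_nonneg _) (hx i)
  exact Real.sqrt_le_sqrt (h.trans_eq (by simp))

lemma norm_dotProduct_mulVec_le {N : ℕ} (M : Matrix (Fin (N + 1)) (Fin (N + 1)) ℂ)
    (x y : Fin (N + 1) → ℂ) :
    ‖star x ⬝ᵥ M *ᵥ y‖ ≤ frobNorm M * (norm2 x * norm2 y) := by
  have hexp : star x ⬝ᵥ M *ᵥ y = ∑ i, ∑ j, star (x i) * M i j * y j := by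
    simp [dotProduct, mulVec, Finset.mul_sum, mul_assoc]
  calc ‖star x ⬝ᵥ M *ᵥ y‖ ≤ ∑ i, ∑ j, ‖M i j‖ * (‖x i‖ * ‖y j‖) := by
        rw [hexp]
        refine (norm_sum_le _ _).trans (Finset.sum_le_sum fun i _ => (norm_sum_le _ _).trans_eq ?_)
        refine Finset.sum_congr rfl fun j _ => ?_
        simp only [norm_mul, norm_star]
        ring
    _ = ∑ p : Fin (N + 1) × Fin (N + 1), ‖M p.1 p.2‖ * (‖x p.1‖ * ‖y p.2‖) :=
        (Fintype.sum_prod_type' _).symm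
    _ ≤ √(∑ p : Fin (N + 1) × Fin (N + 1), ‖M p.1 p.2‖ ^ 2) *
          √(∑ p : Fin (N + 1) × Fin (N + 1), (‖x p.1‖ * ‖y p.2‖) ^ 2) :=
        Real.sum_mul_le_sqrt_mul_sqrt _ _ _
    _ = frobNorm M * (norm2 x * norm2 y) := by
        have hM : ∑ p : Fin (N + 1) × Fin (N + 1), ‖M p.1 p.2‖ ^ 2 = ∑ i, ∑ j, ‖M i j‖ ^ 2 :=
          Fintype.sum_prod_type' (fun i j => ‖M i j‖ ^ 2)
        have hxy : ∑ p : Fin (N + 1) × Fin (N + 1), (‖x p.1‖ * ‖y p.2‖) ^ 2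
            = (∑ i, ‖x i‖ ^ 2) * ∑ j, ‖y j‖ ^ 2 := by
          rw [Fintype.sum_prod_type' (fun i j => (‖x i‖ * ‖y j‖) ^ 2), Finset.sum_mul_sum]
          simp only [mul_pow]
        rw [hM, hxy, Real.sqrt_mul (by positivity), frobNorm, norm2, norm2]

lemma quadForm_le {N : ℕ} (M : Matrix (Fin (N + 1)) (Fin (N + 1)) ℂ) (x : Fin (N + 1) → ℂ) :
    quadForm M x ≤ frobNorm M * norm2 x ^ 2 :=
  (Complex.re_le_norm _).trans ((norm_dotProduct_mulVec_le M x x).trans_eq (by ring))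

lemma quadForm_le_of_norm_le_one {N : ℕ} (M : Matrix (Fin (N + 1)) (Fin (N + 1)) ℂ)
    {x : Fin (N + 1) → ℂ} (hx : ∀ i, ‖x i‖ ≤ 1) :
    quadForm M x ≤ ((N : ℝ) + 1) * frobNorm M := by
  have h := pow_le_pow_left₀ (show 0 ≤ norm2 x from Real.sqrt_nonneg _)
    (norm2_le_sqrt_of_norm_le_one hx) 2
  rw [Real.sq_sqrt (by positivity)] at h
  calc quadForm M x ≤ frobNorm M * norm2 x ^ 2 := quadForm_le M x
    _ ≤ frobNorm M * ((N : ℝ) + 1) := mul_le_mul_of_nonneg_left h (Real.sqrt_nonneg _)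
    _ = ((N : ℝ) + 1) * frobNorm M := mul_comm _ _

lemma abs_quadForm_sub_le {N : ℕ} (M : Matrix (Fin (N + 1)) (Fin (N + 1)) ℂ)
    (x y : Fin (N + 1) → ℂ) :
    |quadForm M x - quadForm M y| ≤ frobNorm M * (norm2 x + norm2 y) * norm2 (x - y) := by
  have hsplit : star x ⬝ᵥ M *ᵥ x - star y ⬝ᵥ M *ᵥ y
      = star x ⬝ᵥ M *ᵥ (x - y) + star (x - y) ⬝ᵥ M *ᵥ y := by
    simp only [mulVec_sub, dotProduct_sub, star_sub, sub_dotProduct]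
    ring
  calc |quadForm M x - quadForm M y|
      = |(star x ⬝ᵥ M *ᵥ (x - y) + star (x - y) ⬝ᵥ M *ᵥ y).re| := by
        rw [quadForm, quadForm, ← Complex.sub_re, hsplit]
    _ ≤ ‖star x ⬝ᵥ M *ᵥ (x - y)‖ + ‖star (x - y) ⬝ᵥ M *ᵥ y‖ :=
        (Complex.abs_re_le_norm _).trans (norm_add_le _ _)
    _ ≤ frobNorm M * (norm2 x * norm2 (x - y)) + frobNorm M * (norm2 (x - y) * norm2 y) :=
        add_le_add (norm_dotProduct_mulVec_le _ _ _) (norm_dotProduct_mulVec_le _ _ _)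
    _ = frobNorm M * (norm2 x + norm2 y) * norm2 (x - y) := by ring

lemma abs_quadForm_sub_le_of_norm_le_one {N : ℕ} (M : Matrix (Fin (N + 1)) (Fin (N + 1)) ℂ)
    {x y : Fin (N + 1) → ℂ} (hx : ∀ i, ‖x i‖ ≤ 1) (hy : ∀ i, ‖y i‖ ≤ 1) :
    |quadForm M x - quadForm M y| ≤ 2 * √((N : ℝ) + 1) * frobNorm M * norm2 (x - y) := by
  have hF : 0 ≤ frobNorm M := Real.sqrt_nonneg _
  have hδ : 0 ≤ norm2 (x - y) := Real.sqrt_nonneg _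
  calc |quadForm M x - quadForm M y| ≤ frobNorm M * (norm2 x + norm2 y) * norm2 (x - y) :=
        abs_quadForm_sub_le M x y
    _ ≤ frobNorm M * (√((N : ℝ) + 1) + √((N : ℝ) + 1)) * norm2 (x - y) := by
        gcongr
        exacts [norm2_le_sqrt_of_norm_le_one hx, norm2_le_sqrt_of_norm_le_one hy]
    _ = 2 * √((N : ℝ) + 1) * frobNorm M * norm2 (x - y) := by ring

lemma quadForm_nonneg {N : ℕ} {M : Matrix (Fin (N + 1)) (Fin (N + 1)) ℂ} (hM : M.PosSemidef)
    (x : Fin (N + 1) → ℂ) : 0 ≤ quadForm M x :=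
  (Complex.nonneg_iff.mp (hM.dotProduct_mulVec_nonneg x)).1

lemma quadForm_sum {N : ℕ} {ι : Type*} (s : Finset ι)
    (M : ι → Matrix (Fin (N + 1)) (Fin (N + 1)) ℂ) (x : Fin (N + 1) → ℂ) :
    quadForm (∑ i ∈ s, M i) x = ∑ i ∈ s, quadForm (M i) x := by
  simp only [quadForm, sum_mulVec, dotProduct_sum, Complex.re_sum]

lemma div_sub_div_le_of_abs_sub_le {p q d e m A B Δ : ℝ} (hm : 0 < m) (hd : m ≤ d)
    (he : m ≤ e) (hq : 0 ≤ q) (hqB : q ≤ B) (hpq : |p - q| ≤ A) (hde : |d - e| ≤ Δ) :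
    p / d - q / e ≤ A / m + B * Δ / m ^ 2 := by
  have hd0 : 0 < d := hm.trans_le hd
  have he0 : 0 < e := hm.trans_le he
  have hΔ : 0 ≤ Δ := (abs_nonneg _).trans hde
  have hsplit : p / d - q / e = (p - q) / d + q * (e - d) / (d * e) := by
    field_simp
    ring
  have hfirst : (p - q) / d ≤ A / m :=
    (div_le_div_of_nonneg_right ((le_abs_self _).trans hpq) hd0.le).trans
      (div_le_div_of_nonneg_left ((abs_nonneg _).trans hpq) hm hd)
  have hnum : q * (e - d) ≤ B * Δ :=
    (mul_le_mul_of_nonneg_left ((le_abs_self _).trans ((abs_sub_comm e d).trans_le hde)) hq).trans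
      (mul_le_mul_of_nonneg_right hqB hΔ)
  have hsecond : q * (e - d) / (d * e) ≤ B * Δ / m ^ 2 :=
    div_le_div₀ (mul_nonneg (hq.trans hqB) hΔ) hnum (by positivity)
      (by nlinarith [mul_le_mul hd he hm.le hd0.le])
  rw [hsplit]
  exact add_le_add hfirst hsecond

lemma Lconst_nonneg {N U : ℕ} (C : Fin U → Fin U → Matrix (Fin (N + 1)) (Fin (N + 1)) ℂ)
    (σ : Fin U → ℝ) (u : Fin U) : 0 ≤ Lconst C σ u := by
  unfold Lconst frobNorm
  positivity

lemma fObj_sub_le {N U : ℕ} {C : Fin U → Fin U → Matrix (Fin (N + 1)) (Fin (N + 1)) ℂ}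
    (hC : ∀ u u', (C u u').PosSemidef) {σ : Fin U → ℝ} (hσ : ∀ u, 0 < σ u) (u : Fin U)
    {x y : Fin (N + 1) → ℂ} (hx : ∀ i, ‖x i‖ ≤ 1) (hy : ∀ i, ‖y i‖ ≤ 1) :
    fObj C σ u x - fObj C σ u y ≤ Lconst C σ u * norm2 (x - y) := by
  have hden : ∀ z, σ u ^ 2 ≤ ∑ u' ∈ univ.erase u, quadForm (C u u') z + σ u ^ 2 := fun z =>
    le_add_of_nonneg_left (Finset.sum_nonneg fun u' _ => quadForm_nonneg (hC u u') z)
  have hinterf : |(∑ u' ∈ univ.erase u, quadForm (C u u') x + σ u ^ 2)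
      - (∑ u' ∈ univ.erase u, quadForm (C u u') y + σ u ^ 2)|
      ≤ 2 * √((N : ℝ) + 1) * frobNorm (∑ u' ∈ univ.erase u, C u u') * norm2 (x - y) := by
    rw [add_sub_add_right_eq_sub, ← quadForm_sum, ← quadForm_sum]
    exact abs_quadForm_sub_le_of_norm_le_one _ hx hy
  calc fObj C σ u x - fObj C σ u y
      ≤ 2 * √((N : ℝ) + 1) * frobNorm (C u u) * norm2 (x - y) / σ u ^ 2
        + ((N : ℝ) + 1) * frobNorm (C u u) *
          (2 * √((N : ℝ) + 1) * frobNorm (∑ u' ∈ univ.erase u, C u u') * norm2 (x - y))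
          / (σ u ^ 2) ^ 2 :=
        div_sub_div_le_of_abs_sub_le (pow_pos (hσ u) 2) (hden x) (hden y)
          (quadForm_nonneg (hC u u) y) (quadForm_le_of_norm_le_one _ hy)
          (abs_quadForm_sub_le_of_norm_le_one _ hx hy) hinterf
    _ = Lconst C σ u * norm2 (x - y) := by
        have := (hσ u).ne'
        rw [Lconst]
        field_simp

lemma ciInf_le_ciInf_add {ι : Type*} [Finite ι] {f g : ι → ℝ} {b : ℝ} (hb : 0 ≤ b)
    (h : ∀ i, f i ≤ g i + b) : ⨅ i, f i ≤ (⨅ i, g i) + b := by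
  cases isEmpty_or_nonempty ι
  · simp [hb]
  · rw [← sub_le_iff_le_add]
    exact le_ciInf fun i => sub_le_iff_le_add.2 ((ciInf_le (Finite.bddBelow_range f) i).trans (h i))

lemma minObj_sub_le {N U : ℕ} {C : Fin U → Fin U → Matrix (Fin (N + 1)) (Fin (N + 1)) ℂ}
    (hC : ∀ u u', (C u u').PosSemidef) {σ : Fin U → ℝ} (hσ : ∀ u, 0 < σ u)
    {x y : Fin (N + 1) → ℂ} (hx : ∀ i, ‖x i‖ ≤ 1) (hy : ∀ i, ‖y i‖ ≤ 1) :
    minObj C σ x - minObj C σ y ≤ (⨆ u, Lconst C σ u) * norm2 (x - y) := by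
  have hδ : 0 ≤ norm2 (x - y) := Real.sqrt_nonneg _
  refine sub_le_iff_le_add'.2
    (ciInf_le_ciInf_add (mul_nonneg (Real.iSup_nonneg (Lconst_nonneg C σ)) hδ) fun u => ?_)
  have hLu : Lconst C σ u ≤ ⨆ u, Lconst C σ u := le_ciSup (Finite.bddAbove_range _) u
  linarith [fObj_sub_le hC hσ u hx hy, mul_le_mul_of_nonneg_right hLu hδ]

lemma re_mul_exp (w : ℂ) (t : ℝ) :
    (w * exp (t * I)).re = w.re * Real.cos t - w.im * Real.sin t := by
  simp [Complex.mul_re, Complex.exp_ofReal_mul_I_re, Complex.exp_ofReal_mul_I_im]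

lemma norm_one_sub_cos_mul_exp (θ : ℝ) :
    ‖1 - Real.cos θ * exp (θ * I)‖ = |Real.sin θ| := by
  rw [← sq_eq_sq₀ (norm_nonneg _) (abs_nonneg _), sq_abs, Complex.sq_norm, Complex.normSq_apply]
  simp only [Complex.sub_re, Complex.sub_im, Complex.one_re, Complex.one_im, Complex.mul_re,
    Complex.mul_im, Complex.ofReal_re, Complex.ofReal_im, Complex.exp_ofReal_mul_I_re,
    Complex.exp_ofReal_mul_I_im]
  linear_combination (Real.cos θ ^ 2 - 1) * Real.sin_sq_add_cos_sq θ

lemma concaveOn_mul_one_sub_norm_sub_mul_norm_one_sub {p q : ℝ} (hp : 0 ≤ p) (hq : 0 ≤ q) :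
    ConcaveOn ℝ Set.univ (fun w : ℂ => p * (1 - ‖w‖) - q * ‖1 - w‖) := by
  refine ⟨convex_univ, fun x _ y _ a b ha hb hab => ?_⟩
  have hcomb : 1 - (a • x + b • y) = a • (1 - x) + b • (1 - y) := by
    have hab' : (a : ℂ) + b = 1 := by exact_mod_cast hab
    simp only [Complex.real_smul]
    linear_combination -hab'
  have hnorm : ∀ u v : ℂ, ‖a • u + b • v‖ ≤ a * ‖u‖ + b * ‖v‖ := fun u v =>
    (norm_add_le _ _).trans_eq (by rw [norm_smul, norm_smul, Real.norm_of_nonneg ha,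
      Real.norm_of_nonneg hb])
  simp only [smul_eq_mul]
  rw [hcomb]
  nlinarith [mul_le_mul_of_nonneg_left (hnorm x y) hp,
    mul_le_mul_of_nonneg_left (hnorm (1 - x) (1 - y)) hq]

lemma add_mul_mem_convexHull_zero_one {p : ℂ} {a b : ℝ} (ha : 0 ≤ a) (hb : 0 ≤ b)
    (hab : a + b ≤ 1) : (a : ℂ) + b * p ∈ convexHull ℝ {0, 1, p} := by
  have h := (convex_convexHull ℝ ({0, 1, p} : Set ℂ)).sum_mem (t := Finset.univ)
    (w := ![1 - a - b, a, b]) (z := ![0, 1, p])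
    (by simp [Fin.forall_fin_succ, ha, hb]; linarith) (by simp [Fin.sum_univ_three]; ring)
    (fun i _ => by fin_cases i <;> exact subset_convexHull ℝ _ (by simp))
  simpa [Fin.sum_univ_three, Complex.real_smul] using h

/-- The corners of the kite spanned by `0`, the vertex `1` of a regular polygon with
half-angle `α` and the midpoints `cos α · e^{± iα}` of the two edges at `1`. -/
def kiteCorners (α : ℝ) : Set ℂ :=
  {0, 1, Real.cos α * exp (α * I), Real.cos α * exp (↑(-α) * I)}

lemma mem_convexHull_kiteCorners {α : ℝ} (hα0 : 0 < α) (hα : α ≤ π / 2) {w : ℂ}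
    (hsector : |w.im| * Real.cos α ≤ w.re * Real.sin α)
    (hedge : w.re * Real.cos α + |w.im| * Real.sin α ≤ Real.cos α) (hre : w.re ≤ 1) :
    w ∈ convexHull ℝ (kiteCorners α) := by
  set c := Real.cos α
  set s := Real.sin α
  set y := |w.im|
  have hs : 0 < s := Real.sin_pos_of_pos_of_lt_pi hα0 (by linarith [Real.pi_pos])
  have hc : 0 ≤ c := Real.cos_nonneg_of_mem_Icc ⟨by linarith [Real.pi_pos], hα⟩
  have hcs : s ^ 2 + c ^ 2 = 1 := Real.sin_sq_add_cos_sq α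
  have hy : 0 ≤ y := abs_nonneg _
  have ha : 0 ≤ w.re - y * c / s := sub_nonneg.2 ((div_le_iff₀ hs).2 hsector)
  have hb : 0 ≤ y / (c * s) := by positivity
  have hbc : y / (c * s) * c = y / s ∧ w.re - y * c / s + y / (c * s) ≤ 1 := by
    rcases hc.eq_or_lt with hc0 | hc0
    -- `c = 0` only for `α = π / 2`: the kite degenerates to `[0, 1]`, and `y / (c * s) = 0`
    · have hy0 : y = 0 := le_antisymm (by nlinarith) hy
      simp [← hc0, hy0, hre]
    · refine ⟨by field_simp, ?_⟩
      have hsum : w.re - y * c / s + y / (c * s) = (w.re * c + y * s) / c := by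
        field_simp
        linear_combination -y * hcs
      rw [hsum]
      exact div_le_one_of_le₀ hedge hc
  obtain ⟨hbc, hab⟩ := hbc
  have hvert : ∀ t : ℝ, Real.cos t = c → Real.sin t * y = s * w.im →
      w = ↑(w.re - y * c / s) + ↑(y / (c * s)) * (c * exp (t * I)) := by
    intro t hct hst
    apply Complex.ext <;>
      simp only [Complex.add_re, Complex.add_im, Complex.mul_re, Complex.mul_im,
        Complex.ofReal_re, Complex.ofReal_im, Complex.exp_ofReal_mul_I_re,
        Complex.exp_ofReal_mul_I_im, hct]
    · linear_combination (-c) * hbc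
    · rw [eq_div_iff hs.ne'] at hbc
      refine mul_left_cancel₀ hs.ne' ?_
      linear_combination (-Real.sin t) * hbc - hst
  rcases le_or_gt 0 w.im with him | him
  · rw [hvert α rfl (by simp only [y, s, abs_of_nonneg him])]
    exact convexHull_mono (by simp [kiteCorners, c, Set.insert_subset_iff])
      (add_mul_mem_convexHull_zero_one ha hb hab)
  · rw [hvert (-α) (Real.cos_neg α) (by simp only [y, s, abs_of_neg him, Real.sin_neg]; ring)]
    exact convexHull_mono (by simp [kiteCorners, c, Set.insert_subset_iff])
      (add_mul_mem_convexHull_zero_one ha hb hab)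

lemma one_sub_cos_mul_norm_one_sub_le_of_mem_convexHull {α : ℝ} (hα0 : 0 ≤ α)
    (hα : α ≤ π / 2) {w : ℂ} (hw : w ∈ convexHull ℝ (kiteCorners α)) :
    (1 - Real.cos α) * ‖1 - w‖ ≤ Real.sin α * (1 - ‖w‖) := by
  have hs : 0 ≤ Real.sin α := Real.sin_nonneg_of_nonneg_of_le_pi hα0 (by linarith [Real.pi_pos])
  have hc : 0 ≤ Real.cos α := Real.cos_nonneg_of_mem_Icc ⟨by linarith [Real.pi_pos], hα⟩
  obtain ⟨v, hv, hle⟩ := (concaveOn_mul_one_sub_norm_sub_mul_norm_one_sub hs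
    (sub_nonneg.2 (Real.cos_le_one α))).exists_le_of_mem_convexHull (Set.subset_univ _) hw
  suffices 0 ≤ Real.sin α * (1 - ‖v‖) - (1 - Real.cos α) * ‖1 - v‖ by linarith
  have hvert : ∀ t : ℝ, Real.cos t = Real.cos α → |Real.sin t| = Real.sin α →
      0 ≤ Real.sin α * (1 - ‖Real.cos α * exp (t * I)‖)
        - (1 - Real.cos α) * ‖1 - Real.cos α * exp (t * I)‖ := by
    intro t hct hst
    rw [← hct, norm_one_sub_cos_mul_exp, norm_mul, Complex.norm_exp_ofReal_mul_I,
      Complex.norm_real, Real.norm_of_nonneg (hct ▸ hc), hst, hct, mul_one, mul_comm, sub_self]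
  simp only [kiteCorners, Set.mem_insert_iff, Set.mem_singleton_iff] at hv
  rcases hv with rfl | rfl | rfl | rfl
  · simp only [norm_zero, sub_zero, norm_one]
    nlinarith [Real.sin_sq_add_cos_sq α, mul_nonneg hs hc]
  · simp
  · exact hvert α rfl (abs_of_nonneg hs)
  · exact hvert (-α) (Real.cos_neg α) (by rw [Real.sin_neg, abs_neg, abs_of_nonneg hs])

lemma abs_im_mul_cos_le_of_re_mul_exp_le {α : ℝ} (hs : 0 < Real.sin α) {w : ℂ}
    (h₁ : (w * exp (↑(2 * α) * I)).re ≤ w.re) (h₂ : (w * exp (↑(-(2 * α)) * I)).re ≤ w.re) :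
    |w.im| * Real.cos α ≤ w.re * Real.sin α := by
  rw [re_mul_exp, Real.cos_two_mul', Real.sin_two_mul] at h₁
  rw [re_mul_exp, Real.cos_neg, Real.sin_neg, Real.cos_two_mul', Real.sin_two_mul] at h₂
  have hcs := Real.sin_sq_add_cos_sq α
  refine le_of_mul_le_mul_left ?_ (mul_pos two_pos hs)
  rcases abs_cases w.im with ⟨h, -⟩ | ⟨h, -⟩ <;> rw [h]
  · linear_combination h₂ - w.re * hcs
  · linear_combination h₁ - w.re * hcs

lemma re_add_abs_im_le_of_re_mul_exp_le {α : ℝ} {w : ℂ}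
    (h₁ : (w * exp (α * I)).re ≤ Real.cos α) (h₂ : (w * exp (↑(-α) * I)).re ≤ Real.cos α) :
    w.re * Real.cos α + |w.im| * Real.sin α ≤ Real.cos α := by
  rw [re_mul_exp] at h₁
  rw [re_mul_exp, Real.cos_neg, Real.sin_neg] at h₂
  rcases abs_cases w.im with ⟨h, -⟩ | ⟨h, -⟩ <;> rw [h] <;> linarith

-- `hsector`: neither neighbouring vertex `e^{∓ 2iα}` is closer to `w` than `1`;
-- `hedge`: `w` lies on the inner side of the two polygon edges at `1`.
lemma one_sub_cos_mul_norm_one_sub_le {α : ℝ} (hα0 : 0 < α) (hα : α ≤ π / 2) {w : ℂ}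
    (hw : ‖w‖ ≤ 1)
    (hsector₁ : (w * exp (↑(2 * α) * I)).re ≤ w.re)
    (hsector₂ : (w * exp (↑(-(2 * α)) * I)).re ≤ w.re)
    (hedge₁ : (w * exp (α * I)).re ≤ Real.cos α) (hedge₂ : (w * exp (↑(-α) * I)).re ≤ Real.cos α) :
    (1 - Real.cos α) * ‖1 - w‖ ≤ Real.sin α * (1 - ‖w‖) :=
  one_sub_cos_mul_norm_one_sub_le_of_mem_convexHull hα0.le hα <| mem_convexHull_kiteCorners hα0 hα
    (abs_im_mul_cos_le_of_re_mul_exp_le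
      (Real.sin_pos_of_pos_of_lt_pi hα0 (by linarith [Real.pi_pos])) hsector₁ hsector₂)
    (re_add_abs_im_le_of_re_mul_exp_le hedge₁ hedge₂) ((Complex.re_le_norm _).trans hw)

lemma mem_rootsSet_iff {K : ℕ} (hK : K ≠ 0) {z : ℂ} : z ∈ rootsSet K ↔ z ^ K = 1 := by
  constructor
  · rintro ⟨k, -, rfl⟩
    rw [← Complex.exp_nat_mul, ← Complex.exp_nat_mul_two_pi_mul_I k]
    congr 1
    push_cast
    field_simp
  · intro hz
    have : NeZero K := ⟨hK⟩
    obtain ⟨k, hk, rfl⟩ := (Complex.isPrimitiveRoot_exp K hK).eq_pow_of_pow_eq_one hz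
    refine ⟨k, hk, ?_⟩
    rw [← Complex.exp_nat_mul]
    congr 1
    push_cast
    ring

lemma mul_mem_rootsSet {K : ℕ} (hK : K ≠ 0) {ρ ρ' : ℂ} (hρ : ρ ∈ rootsSet K)
    (hρ' : ρ' ∈ rootsSet K) : ρ * ρ' ∈ rootsSet K := by
  rw [mem_rootsSet_iff hK] at *
  rw [mul_pow, hρ, hρ', one_mul]

lemma inv_mem_rootsSet {K : ℕ} (hK : K ≠ 0) {ρ : ℂ} (hρ : ρ ∈ rootsSet K) :
    ρ⁻¹ ∈ rootsSet K := by
  rw [mem_rootsSet_iff hK] at *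
  rw [inv_pow, hρ, inv_one]

lemma exp_mem_rootsSet {K : ℕ} (hK : K ≠ 0) {t : ℝ} (ht : t = 2 * (π / K) ∨ t = -(2 * (π / K))) :
    exp (t * I) ∈ rootsSet K := by
  rw [mem_rootsSet_iff hK, ← Complex.exp_nat_mul]
  rcases ht with rfl | rfl
  · rw [← Complex.exp_nat_mul_two_pi_mul_I 1]
    congr 1
    push_cast
    field_simp
  · rw [← Complex.exp_int_mul_two_pi_mul_I (-1)]
    congr 1
    push_cast
    field_simp

lemma rootsSet_finite (K : ℕ) : (rootsSet K).Finite :=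
  ((Set.finite_lt_nat K).image fun k : ℕ => exp ((2 * π * k / K : ℝ) * I)).subset
    fun _ ⟨k, hk, hz⟩ => ⟨k, hk, hz.symm⟩

lemma norm_of_mem_rootsSet {K : ℕ} {z : ℂ} (hz : z ∈ rootsSet K) : ‖z‖ = 1 := by
  obtain ⟨k, -, rfl⟩ := hz
  exact Complex.norm_exp_ofReal_mul_I _

lemma norm_le_one_of_mem_hullSet {K : ℕ} {z : ℂ} (hz : z ∈ hullSet K) : ‖z‖ ≤ 1 := by
  have h : hullSet K ⊆ Metric.closedBall 0 1 :=
    convexHull_min (fun u hu => by simp [norm_of_mem_rootsSet hu]) (convex_closedBall _ _)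
  simpa using h hz

lemma re_mul_le_of_mem_convexHull {S : Set ℂ} {e : ℂ} {b : ℝ} (h : ∀ u ∈ S, (u * e).re ≤ b)
    {z : ℂ} (hz : z ∈ convexHull ℝ S) : (z * e).re ≤ b := by
  have hconv : Convex ℝ {u : ℂ | (u * e).re ≤ b} :=
    convex_halfSpace_le ⟨fun u v => by simp [add_mul], fun t u => by
      simp [Complex.real_smul, mul_assoc]⟩ b
  exact convexHull_min h hconv hz

lemma cos_int_mul_pi_div_le {K : ℕ} (hK : 0 < K) {j : ℤ} (hj0 : j ≠ 0) (hjK : |j| < 2 * K) :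
    Real.cos (j * (π / K)) ≤ Real.cos (π / K) := by
  have hα : 0 < π / K := by positivity
  have h1 : (1 : ℝ) ≤ |(j : ℝ)| := by exact_mod_cast Int.one_le_abs hj0
  have h2 : |(j : ℝ)| ≤ 2 * K - 1 := by
    have : |j| ≤ 2 * K - 1 := by omega
    exact_mod_cast this
  have hKα : (K : ℝ) * (π / K) = π := by field_simp
  rw [← Real.cos_abs, abs_mul, abs_of_pos hα]
  rcases le_or_gt (|(j : ℝ)| * (π / K)) π with h | h
  · exact Real.cos_le_cos_of_nonneg_of_le_pi hα.le h (by nlinarith)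
  · rw [← Real.cos_two_pi_sub]
    exact Real.cos_le_cos_of_nonneg_of_le_pi hα.le (by linarith) (by nlinarith)

lemma re_mul_exp_le_of_mem_rootsSet {K : ℕ} (hK : 0 < K) {ρ : ℂ} (hρ : ρ ∈ rootsSet K)
    {t : ℝ} (ht : t = π / K ∨ t = -(π / K)) : (ρ * exp (t * I)).re ≤ Real.cos (π / K) := by
  obtain ⟨k, hk, rfl⟩ := hρ
  rw [← Complex.exp_add, ← add_mul, ← Complex.ofReal_add, Complex.exp_ofReal_mul_I_re]
  have hK0 : (K : ℝ) ≠ 0 := by positivity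
  rcases ht with rfl | rfl
  · convert cos_int_mul_pi_div_le hK (j := 2 * k + 1) (by omega) (by rw [abs_lt]; omega) using 2
    push_cast
    field_simp
  · convert cos_int_mul_pi_div_le hK (j := 2 * k - 1) (by omega) (by rw [abs_lt]; omega) using 2
    push_cast
    field_simp
    ring

lemma exists_mem_rootsSet_norm_sub_le {K : ℕ} (hK : 2 ≤ K) {z : ℂ} (hz : z ∈ hullSet K) :
    ∃ v ∈ rootsSet K, ‖v - z‖ ≤ Real.sin (π / K) / (1 - Real.cos (π / K)) * (1 - ‖z‖) := by
  have hK0 : K ≠ 0 := by omega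
  have hα0 : 0 < π / K := by positivity
  have hα : π / K ≤ π / 2 := div_le_div_of_nonneg_left Real.pi_pos.le two_pos (by exact_mod_cast hK)
  have hc : Real.cos (π / K) < 1 := by
    nlinarith [Real.sin_sq_add_cos_sq (π / K), Real.cos_le_one (π / K),
      Real.sin_pos_of_pos_of_lt_pi hα0 (by linarith [Real.pi_pos])]
  -- `u⁻¹` is a vertex nearest to `z`, and multiplying by `u` rotates it to `1`
  obtain ⟨u, hu, hmax⟩ := Set.exists_max_image _ (fun u => (z * u).re) (rootsSet_finite K)
    ⟨1, (mem_rootsSet_iff hK0).2 (one_pow K)⟩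
  have hsector : ∀ t : ℝ, t = 2 * (π / K) ∨ t = -(2 * (π / K)) →
      (z * u * exp (t * I)).re ≤ (z * u).re := fun t ht => by
    simpa only [mul_assoc] using hmax _ (mul_mem_rootsSet hK0 hu (exp_mem_rootsSet hK0 ht))
  have hedge : ∀ t : ℝ, t = π / K ∨ t = -(π / K) →
      (z * u * exp (t * I)).re ≤ Real.cos (π / K) := fun t ht => by
    simpa only [mul_assoc] using re_mul_le_of_mem_convexHull
      (fun ρ hρ => by simpa only [mul_assoc] using
        re_mul_exp_le_of_mem_rootsSet (by omega) (mul_mem_rootsSet hK0 hρ hu) ht) hz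
  have hu1 : ‖u‖ = 1 := norm_of_mem_rootsSet hu
  have hw : ‖z * u‖ = ‖z‖ := by rw [norm_mul, hu1, mul_one]
  have hgap := one_sub_cos_mul_norm_one_sub_le hα0 hα (hw ▸ norm_le_one_of_mem_hullSet hz)
    (hsector _ (Or.inl rfl)) (hsector _ (Or.inr rfl)) (hedge _ (Or.inl rfl)) (hedge _ (Or.inr rfl))
  have hdist : ‖u⁻¹ - z‖ = ‖1 - z * u‖ := by
    rw [← one_mul ‖u⁻¹ - z‖, ← hu1, ← norm_mul, mul_sub,
      mul_inv_cancel₀ (norm_ne_zero_iff.1 (hu1.trans_ne one_ne_zero)), mul_comm]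
  refine ⟨u⁻¹, inv_mem_rootsSet hK0 hu, ?_⟩
  rw [hdist, div_mul_eq_mul_div, le_div_iff₀ (sub_pos.2 hc), ← hw]
  linarith

lemma norm_le_one_of_mem_feasA {K N : ℕ} {x : Fin (N + 1) → ℂ} (hx : x ∈ feasA K N)
    (i : Fin (N + 1)) : ‖x i‖ ≤ 1 := by
  by_cases hi : i = 0
  · rw [hi, hx.1, norm_one]
  · exact norm_le_one_of_mem_hullSet (hx.2 i hi)

lemma update_mem_feasA {K N : ℕ} {x : Fin (N + 1) → ℂ} (hx : x ∈ feasA K N) {n : Fin (N + 1)}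
    (hn : n ≠ 0) {v : ℂ} (hv : v ∈ hullSet K) : Function.update x n v ∈ feasA K N := by
  refine ⟨by rw [Function.update_of_ne (Ne.symm hn)]; exact hx.1, fun i hi => ?_⟩
  rcases eq_or_ne i n with rfl | hin
  · rwa [Function.update_self]
  · rw [Function.update_of_ne hin]
    exact hx.2 i hi

lemma norm1_of_mem_feasD {K N : ℕ} {x : Fin (N + 1) → ℂ} (hx : x ∈ feasD K N) :
    norm1 x = (N : ℝ) + 1 := by
  have h : ∀ i, ‖x i‖ = 1 := fun i => by
    by_cases hi : i = 0
    · rw [hi, hx.1, norm_one]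
    · exact norm_of_mem_rootsSet (hx.2 i hi)
  simp [norm1, h]

lemma norm1_update {N : ℕ} (x : Fin (N + 1) → ℂ) (n : Fin (N + 1)) (v : ℂ) :
    norm1 (Function.update x n v) = norm1 x - ‖x n‖ + ‖v‖ := by
  have h : ∑ i, (‖Function.update x n v i‖ - ‖x i‖) = ‖v‖ - ‖x n‖ := by
    rw [Finset.sum_eq_single n (fun i _ hi => by rw [Function.update_of_ne hi, sub_self])
      (by simp), Function.update_self]
  rw [Finset.sum_sub_distrib] at h
  rw [norm1, norm1]
  linarith

lemma norm2_sub_update {N : ℕ} (x : Fin (N + 1) → ℂ) (n : Fin (N + 1)) (v : ℂ) :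
    norm2 (x - Function.update x n v) = ‖x n - v‖ := by
  rw [norm2, Finset.sum_eq_single n (fun i _ hi => by simp [Function.update_of_ne hi]) (by simp),
    Pi.sub_apply, Function.update_self, Real.sqrt_sq (norm_nonneg _)]

lemma f0_lt_f0_update {N U : ℕ} {C : Fin U → Fin U → Matrix (Fin (N + 1)) (Fin (N + 1)) ℂ}
    (hC : ∀ u u', (C u u').PosSemidef) {σ : Fin U → ℝ} (hσ : ∀ u, 0 < σ u) {lam κ : ℝ}
    (hlam : κ * (⨆ u, Lconst C σ u) < lam) {x : Fin (N + 1) → ℂ} (hx : ∀ i, ‖x i‖ ≤ 1)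
    {n : Fin (N + 1)} {v : ℂ} (hv : ‖v‖ = 1) (hne : v ≠ x n)
    (hnear : ‖v - x n‖ ≤ κ * (1 - ‖x n‖)) :
    f0 C σ lam x < f0 C σ lam (Function.update x n v) := by
  have hL : 0 ≤ ⨆ u, Lconst C σ u := Real.iSup_nonneg (Lconst_nonneg C σ)
  have hδ : 0 < ‖v - x n‖ := norm_pos_iff.2 (sub_ne_zero.2 hne)
  have hr : 0 < 1 - ‖x n‖ := (sub_nonneg.2 (hx n)).lt_of_ne fun h => by
    rw [← h, mul_zero] at hnear
    linarith
  have hx' : ∀ i, ‖Function.update x n v i‖ ≤ 1 := fun i => by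
    rcases eq_or_ne i n with rfl | hi
    · rw [Function.update_self, hv]
    · rw [Function.update_of_ne hi]
      exact hx i
  have hmin := minObj_sub_le hC hσ hx hx'
  rw [norm2_sub_update, norm_sub_rev] at hmin
  have hgain : (⨆ u, Lconst C σ u) * ‖v - x n‖ < lam * (1 - ‖x n‖) :=
    calc (⨆ u, Lconst C σ u) * ‖v - x n‖ ≤ κ * (⨆ u, Lconst C σ u) * (1 - ‖x n‖) := by
          nlinarith [mul_le_mul_of_nonneg_left hnear hL]
      _ < lam * (1 - ‖x n‖) := mul_lt_mul_of_pos_right hlam hr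
  rw [f0, f0, norm1_update, hv]
  linarith

theorem stmt0_general
    (K N U : ℕ) (hK : 2 ≤ K)
    (a : Fin U → Fin U → (Fin (N + 1) → ℂ))
    (C : Fin U → Fin U → Matrix (Fin (N + 1)) (Fin (N + 1)) ℂ)
    (hC : ∀ u u' : Fin U, C u u' = Matrix.vecMulVec (a u u') (star (a u u')))
    (σ : Fin U → ℝ) (hσ : ∀ u, 0 < σ u)
    (lam : ℝ)
    (hlam : Real.sin (Real.pi / K) / (1 - Real.cos (Real.pi / K)) * (⨆ u, Lconst C σ u) < lam)
    (xstar : Fin (N + 1) → ℂ) (hxA : xstar ∈ feasA K N)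
    (hopt : ∀ x ∈ feasA K N, f0 C σ lam x ≤ f0 C σ lam xstar) :
    (∀ n : Fin (N + 1), n ≠ 0 → xstar n ∈ rootsSet K) ∧
      norm1 xstar = (N : ℝ) + 1 := by
  have hpsd : ∀ u u', (C u u').PosSemidef := fun u u' =>
    hC u u' ▸ posSemidef_vecMulVec_self_star _
  have hD : xstar ∈ feasD K N := by
    refine ⟨hxA.1, fun n hn => ?_⟩
    by_contra hnot
    obtain ⟨v, hv, hnear⟩ := exists_mem_rootsSet_norm_sub_le hK (hxA.2 n hn)
    have hbetter := f0_lt_f0_update hpsd hσ hlam (norm_le_one_of_mem_feasA hxA)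
      (norm_of_mem_rootsSet hv) (fun h => hnot (h ▸ hv)) hnear
    exact (hopt _ (update_mem_feasA hxA hn (subset_convexHull ℝ _ hv))).not_gt hbetter
  exact ⟨hD.2, norm1_of_mem_feasD hD⟩

theorem stmt0
    (K N U : ℕ) (hK : 2 ≤ K) (hN : 1 ≤ N) (hU : 1 ≤ U)
    (a : Fin U → Fin U → (Fin (N + 1) → ℂ))
    (C : Fin U → Fin U → Matrix (Fin (N + 1)) (Fin (N + 1)) ℂ)
    (hC : ∀ u u' : Fin U, C u u' = Matrix.vecMulVec (a u u') (star (a u u')))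
    (σ : Fin U → ℝ) (hσ : ∀ u, 0 < σ u)
    (lam : ℝ)
    (hlam : Real.sin (Real.pi / K) / (1 - Real.cos (Real.pi / K)) * (⨆ u, Lconst C σ u) < lam)
    (xstar : Fin (N + 1) → ℂ) (hxA : xstar ∈ feasA K N)
    (hopt : ∀ x ∈ feasA K N, f0 C σ lam x ≤ f0 C σ lam xstar) :
    (∀ n : Fin (N + 1), n ≠ 0 → xstar n ∈ rootsSet K) ∧
      norm1 xstar = (N : ℝ) + 1 :=
  stmt0_general K N U hK a C hC σ hσ lam hlam xstar hxA hopt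
end
end

section
/- Let K ≥ 2 be an integer and set s = sin(π/K), c = cos(π/K). Let L ≥ 0 and λ be real numbers with λ > (s/(1 − c))·L. Then for every real t with 0 < t ≤ s, one has λ·(1 − √(c² + (s − t)²)) − L·t > 0. -/
open Complex Finset

noncomputable section

/-- By convexity of the Euclidean norm, the distance from the origin to `(c, s - t)` lies below the
chord joining its values `1` at `t = 0` and `c` at `t = s`. -/
theorem sqrt_sq_add_sub_sq_le_chord {s c t : ℝ} (hs : 0 < s) (hc : 0 ≤ c)
    (hsc : s ^ 2 + c ^ 2 = 1) (ht : 0 ≤ t) (hts : t ≤ s) :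
    Real.sqrt (c ^ 2 + (s - t) ^ 2) ≤ 1 - (1 - c) / s * t := by
  have hc1 : c ≤ 1 := by nlinarith
  have hchord : 1 - (1 - c) / s * t = (s - (1 - c) * t) / s := by field_simp
  have hchord_nonneg : 0 ≤ s - (1 - c) * t := by nlinarith
  -- `(s - (1 - c) t)² - s² (c² + (s - t)²) = 2 c (1 - c) t (s - t)` once `s² = 1 - c²`
  have hgap : s ^ 2 * (c ^ 2 + (s - t) ^ 2) ≤ (s - (1 - c) * t) ^ 2 := by
    nlinarith [mul_nonneg (mul_nonneg (mul_nonneg hc (sub_nonneg.2 hc1)) ht) (sub_nonneg.2 hts)]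
  rw [hchord, Real.sqrt_le_left (div_nonneg hchord_nonneg hs.le), div_pow,
    le_div_iff₀ (by positivity)]
  linarith

theorem sin_pi_div_pos {K : ℕ} (hK : 2 ≤ K) : 0 < Real.sin (Real.pi / K) := by
  have hK1 : (1 : ℝ) < K := by exact_mod_cast hK
  exact Real.sin_pos_of_pos_of_lt_pi (by positivity) (div_lt_self Real.pi_pos hK1)

theorem cos_pi_div_nonneg {K : ℕ} (hK : 2 ≤ K) : 0 ≤ Real.cos (Real.pi / K) := by
  have hK2 : (2 : ℝ) ≤ K := by exact_mod_cast hK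
  refine Real.cos_nonneg_of_mem_Icc ⟨by linarith [Real.pi_pos, show 0 ≤ Real.pi / K by positivity], ?_⟩
  exact div_le_div_of_nonneg_left Real.pi_pos.le two_pos hK2

theorem stmt9 (K : ℕ) (hK : 2 ≤ K) (L lam : ℝ) (hL : 0 ≤ L)
    (hlam : Real.sin (Real.pi / K) / (1 - Real.cos (Real.pi / K)) * L < lam) :
    ∀ t : ℝ, 0 < t → t ≤ Real.sin (Real.pi / K) →
      0 < lam * (1 - Real.sqrt (Real.cos (Real.pi / K) ^ 2 +
        (Real.sin (Real.pi / K) - t) ^ 2)) - L * t := by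
  intro t ht hts
  set s := Real.sin (Real.pi / K)
  set c := Real.cos (Real.pi / K)
  have hs : 0 < s := sin_pi_div_pos hK
  have hsc : s ^ 2 + c ^ 2 = 1 := Real.sin_sq_add_cos_sq _
  have hc1 : 0 < 1 - c := by nlinarith
  have hsL : s * L < lam * (1 - c) := by rwa [div_mul_eq_mul_div, div_lt_iff₀ hc1] at hlam
  have hslope : L * t < lam * ((1 - c) / s * t) := by
    have : L < lam * (1 - c) / s := by rw [lt_div_iff₀ hs]; linarith
    calc L * t < lam * (1 - c) / s * t := mul_lt_mul_of_pos_right this ht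
      _ = lam * ((1 - c) / s * t) := by ring
  have hlam_pos : 0 < lam := lt_of_le_of_lt (by positivity) hlam
  have hchord := mul_le_mul_of_nonneg_left
    (sqrt_sq_add_sub_sq_le_chord hs (cos_pi_div_nonneg hK) hsc ht.le hts) hlam_pos.le
  linarith
end
end
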